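/- arXiv:2410.22687 — 5 statements merged into one kernel-verified Lean document; each statement's English description precedes it below -/
import Mathlib

section
/- Analogue of Krasner's lemma: let α ∈ K and let α = α₁, α₂, …, α_n be the distinct Galois conjugates of α over ℚ (i.e., the images of α under Gal(K/ℚ)). Suppose β ∈ K satisfies d(α, β) < (1/2)·d(α, α_i) for every i = 2, …, n. Then ℚ(α) ⊆ ℚ(β) (as subfields of K). -/
/-!
Galois automorphisms permute the powers `ω, …, ω^(p-1)` and preserve the trace, so the
cyclotomic norm, a Euclidean norm of trace vectors, is Galois invariant. Hence if `σ` fixes `β`,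
the triangle inequality gives `d(α, σ α) ≤ d(α, β) + d(σ β, σ α) = 2 d(α, β)`, so `σ` must
fix `α`; by the Galois correspondence `α ∈ ℚ(β)`.
-/

/-- The cyclotomic norm: `‖α‖ = √(Σ_{j=1}^{p−1} Tr(α·ω^j)²)`. -/
noncomputable def cycNorm (p : ℕ) {K : Type*} [Field K] [Algebra ℚ K] (ω : K) (α : K) : ℝ :=
  Real.sqrt (∑ j ∈ Finset.Icc 1 (p - 1), ((Algebra.trace ℚ K (α * ω ^ j) : ℚ) : ℝ) ^ 2)

/-- The metric induced by the cyclotomic norm: `d(α, β) = ‖α − β‖`. -/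
noncomputable def cycDist (p : ℕ) {K : Type*} [Field K] [Algebra ℚ K] (ω : K) (α β : K) : ℝ :=
  cycNorm p ω (α - β)

open Finset

theorem Function.Periodic.sum_Icc_comp_mul {M : Type*} [AddCommMonoid M] {f : ℕ → M} {n : ℕ}
    (hf : Function.Periodic f n) {k : ℕ} (hk : k.Coprime n) :
    ∑ j ∈ Icc 1 (n - 1), f (k * j) = ∑ j ∈ Icc 1 (n - 1), f j := by
  rcases le_or_gt n 1 with hn | hn
  · simp [Icc_eq_empty (by omega : ¬1 ≤ n - 1)]
  obtain ⟨m, -, hkm⟩ := Nat.exists_mul_mod_eq_one_of_coprime hk hn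
  have hm : m.Coprime n :=
    Nat.coprime_of_mul_modEq_one k (by rw [Nat.ModEq, mul_comm, hkm, Nat.mod_eq_of_lt hn])
  have mem : ∀ c, c.Coprime n → ∀ j ∈ Icc 1 (n - 1), c * j % n ∈ Icc 1 (n - 1) := by
    intro c hc j hj
    rw [mem_Icc] at hj ⊢
    have hnj : ¬ n ∣ j := Nat.not_dvd_of_pos_of_lt (by omega) (by omega)
    have hndvd : ¬ n ∣ c * j := fun h => hnj (hc.symm.dvd_of_dvd_mul_left h)
    have := Nat.mod_lt (c * j) (by omega : 0 < n)
    have := (Nat.dvd_iff_mod_eq_zero).not.mp hndvd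
    omega
  have inv : ∀ c d, c * d % n = 1 → ∀ j ∈ Icc 1 (n - 1), d * (c * j % n) % n = j := by
    intro c d hcd j hj
    rw [mem_Icc] at hj
    rw [Nat.mul_mod_mod, ← mul_assoc, Nat.mul_mod, mul_comm d, hcd, one_mul, Nat.mod_mod,
      Nat.mod_eq_of_lt (by omega)]
  refine sum_nbij' (fun j => k * j % n) (fun j => m * j % n) (mem k hk) (mem m hm)
    (inv k m hkm) (inv m k (by rwa [mul_comm])) fun j _ => ?_
  exact (hf.map_mod_nat _).symm

section TraceVec

variable {K : Type*} [Field K] [Algebra ℚ K]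

noncomputable def traceVec (p : ℕ) (ω α : K) : EuclideanSpace ℝ (Icc 1 (p - 1)) :=
  WithLp.toLp 2 fun j => ((Algebra.trace ℚ K (α * ω ^ (j : ℕ)) : ℚ) : ℝ)

theorem cycDist_eq_dist (p : ℕ) (ω α β : K) :
    cycDist p ω α β = dist (traceVec p ω α) (traceVec p ω β) := by
  rw [EuclideanSpace.dist_eq, cycDist, cycNorm,
    ← sum_coe_sort (Icc 1 (p - 1)) fun j => ((Algebra.trace ℚ K ((α - β) * ω ^ j) : ℚ) : ℝ) ^ 2]
  simp only [traceVec, PiLp.toLp_apply, Real.dist_eq, sq_abs, sub_mul, map_sub, Rat.cast_sub]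

theorem cycDist_triangle (p : ℕ) (ω α β γ : K) :
    cycDist p ω α γ ≤ cycDist p ω α β + cycDist p ω β γ := by
  simp only [cycDist_eq_dist]
  exact dist_triangle _ _ _

theorem cycDist_comm (p : ℕ) (ω α β : K) : cycDist p ω α β = cycDist p ω β α := by
  simp only [cycDist_eq_dist]
  exact dist_comm _ _

theorem cycNorm_algEquiv {p : ℕ} [NeZero p] {ω : K} (hω : IsPrimitiveRoot ω p)
    (σ : K ≃ₐ[ℚ] K) (α : K) : cycNorm p ω (σ α) = cycNorm p ω α := by
  obtain ⟨k, -, hk, hωk⟩ :=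
    hω.isPrimitiveRoot_iff.mp (hω.map_of_injective σ.symm.injective)
  have htrace (j : ℕ) :
      Algebra.trace ℚ K (σ α * ω ^ j) = Algebra.trace ℚ K (α * ω ^ (k * j)) := by
    rw [← σ.apply_symm_apply (ω ^ j), ← map_mul, Algebra.trace_eq_of_algEquiv, map_pow, ← hωk,
      ← pow_mul]
  have hper :
      Function.Periodic (fun j : ℕ => ((Algebra.trace ℚ K (α * ω ^ j) : ℚ) : ℝ) ^ 2) p := by
    intro j
    simp only [pow_add, hω.pow_eq_one, mul_one]
  simp only [cycNorm, htrace]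
  rw [hper.sum_Icc_comp_mul hk]

theorem cycDist_algEquiv {p : ℕ} [NeZero p] {ω : K} (hω : IsPrimitiveRoot ω p)
    (σ : K ≃ₐ[ℚ] K) (α β : K) : cycDist p ω (σ α) (σ β) = cycDist p ω α β := by
  rw [cycDist, ← map_sub, cycNorm_algEquiv hω, cycDist]

theorem cycDist_apply_le_two_mul {p : ℕ} [NeZero p] {ω : K} (hω : IsPrimitiveRoot ω p)
    {σ : K ≃ₐ[ℚ] K} {β : K} (hσ : σ β = β) (α : K) :
    cycDist p ω α (σ α) ≤ 2 * cycDist p ω α β := by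
  have hconj : cycDist p ω β (σ α) = cycDist p ω α β :=
    calc cycDist p ω β (σ α) = cycDist p ω (σ β) (σ α) := by rw [hσ]
      _ = cycDist p ω α β := by rw [cycDist_algEquiv hω, cycDist_comm]
  linarith [cycDist_triangle p ω α β (σ α)]

end TraceVec

theorem IntermediateField.adjoin_simple_le_of_forall_algEquiv {F E : Type*} [Field F] [Field E]
    [Algebra F E] [FiniteDimensional F E] [IsGalois F E] {α β : E}
    (h : ∀ σ : E ≃ₐ[F] E, σ β = β → σ α = α) : adjoin F {α} ≤ adjoin F {β} := by
  rw [adjoin_simple_le_iff, ← IsGalois.fixedField_fixingSubgroup (adjoin F {β})]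
  rintro ⟨σ, hσ⟩
  exact h σ ((mem_fixingSubgroup_iff _ σ).mp hσ β (mem_adjoin_simple_self F β))

theorem stmt3_general (p : ℕ+)
    (K : Type*) [Field K] [Algebra ℚ K] [IsCyclotomicExtension {(p : ℕ)} ℚ K]
    (ω : K) (hω : IsPrimitiveRoot ω p) (α β : K)
    (h : ∀ σ : K ≃ₐ[ℚ] K, σ α ≠ α →
      cycDist p ω α β < (1 / 2) * cycDist p ω α (σ α)) :
    IntermediateField.adjoin ℚ {α} ≤ IntermediateField.adjoin ℚ {β} := by
  have : IsGalois ℚ K := IsCyclotomicExtension.isGalois {(p : ℕ)} ℚ K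
  have : FiniteDimensional ℚ K := IsCyclotomicExtension.finiteDimensional {(p : ℕ)} ℚ K
  refine IntermediateField.adjoin_simple_le_of_forall_algEquiv fun σ hσ => ?_
  by_contra hne
  linarith [h σ hne, cycDist_apply_le_two_mul hω hσ α]

/-- Analogue of Krasner's lemma: if `β` is closer to `α` than half the distance from `α`
to each of its nontrivial Galois conjugates, then `ℚ(α) ⊆ ℚ(β)`. -/
theorem stmt3 (p : ℕ+) (hp : (p : ℕ).Prime) (hodd : Odd (p : ℕ))
    (K : Type*) [Field K] [Algebra ℚ K] [IsCyclotomicExtension {(p : ℕ)} ℚ K]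
    (ω : K) (hω : IsPrimitiveRoot ω p) (α β : K)
    (h : ∀ σ : K ≃ₐ[ℚ] K, σ α ≠ α →
      cycDist p ω α β < (1 / 2) * cycDist p ω α (σ α)) :
    IntermediateField.adjoin ℚ {α} ≤ IntermediateField.adjoin ℚ {β} :=
  stmt3_general p K ω hω α β h
end

section
/- The constant 1/2 in the Krasner-type lemma is optimal: for p = 3, α = ω, and β = −1/2, one has d(α, β) = 3/√2 and d(α, ω²) = 3√2, so that d(α, β) = (1/2)·d(α, ω²) (where ω² is the unique Galois conjugate of α other than α itself), yet ℚ(α) is not contained in ℚ(β). -/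
/-!
Since `ω² = −1 − ω` and the minimal polynomial of `ω` is `X² + X + 1`, we have
`Tr(a + bω) = 2a − b` for rational `a, b`, and multiplying by `ω` and `ω²` gives
`‖a + bω‖² = (a + b)² + (2b − a)²`. Now `ω + 1/2` and `ω − ω² = 1 + 2ω` have squared norms
`9/2` and `18`. Finally `ℚ(−1/2) = ℚ` cannot contain `ω`, whose minimal polynomial has degree 2.
-/

open Polynomial

namespace IsPrimitiveRoot

variable {K : Type*} [Field K] {ω : K}

theorem sq_add_self_add_one (hω : IsPrimitiveRoot ω 3) : ω ^ 2 + ω + 1 = 0 := by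
  simpa [cyclotomic_three] using hω.isRoot_cyclotomic (by norm_num)

variable [Algebra ℚ K]

theorem minpoly_rat_eq_X_sq_add_X_add_one (hω : IsPrimitiveRoot ω 3) :
    minpoly ℚ ω = X ^ 2 + X + 1 := by
  have : CharZero K := charZero_of_injective_algebraMap (algebraMap ℚ K).injective
  rw [← cyclotomic_three]
  -- `cyclotomic_eq_minpoly_rat` is stated for the canonical `ℚ`-algebra structure on `K`
  convert (cyclotomic_eq_minpoly_rat hω (by norm_num)).symm using 2
  exact Subsingleton.elim _ _

theorem notMem_bot_rat (hω : IsPrimitiveRoot ω 3) : ω ∉ (⊥ : IntermediateField ℚ K) := by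
  rw [IntermediateField.mem_bot, ← RingHom.coe_range, SetLike.mem_coe,
    ← minpoly.natDegree_eq_one_iff, hω.minpoly_rat_eq_X_sq_add_X_add_one,
    show (X ^ 2 + X + 1 : ℚ[X]).natDegree = 2 by compute_degree!]
  decide

variable [IsCyclotomicExtension {3} ℚ K]

theorem trace_rat_eq_neg_one (hω : IsPrimitiveRoot ω 3) : Algebra.trace ℚ K ω = -1 := by
  have h := (hω.powerBasis ℚ).trace_gen_eq_nextCoeff_minpoly
  rw [powerBasis_gen, hω.minpoly_rat_eq_X_sq_add_X_add_one, nextCoeff,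
    show (X ^ 2 + X + 1 : ℚ[X]).natDegree = 2 by compute_degree!] at h
  simpa [coeff_one] using h

theorem trace_algebraMap_add_algebraMap_mul (hω : IsPrimitiveRoot ω 3) (a b : ℚ) :
    Algebra.trace ℚ K (algebraMap ℚ K a + algebraMap ℚ K b * ω) = 2 * a - b := by
  have hrank : Module.finrank ℚ K = 2 := by
    rw [(hω.powerBasis ℚ).finrank, powerBasis_dim, hω.minpoly_rat_eq_X_sq_add_X_add_one]
    compute_degree!
  rw [← Algebra.smul_def, map_add, Algebra.trace_algebraMap, map_smul, hω.trace_rat_eq_neg_one,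
    hrank, nsmul_eq_mul, smul_eq_mul]
  ring

theorem cycNorm_algebraMap_add_algebraMap_mul (hω : IsPrimitiveRoot ω 3) (a b : ℚ) :
    cycNorm 3 ω (algebraMap ℚ K a + algebraMap ℚ K b * ω) =
      √(((a + b) ^ 2 + (2 * b - a) ^ 2 : ℚ)) := by
  have hmul_ω : (algebraMap ℚ K a + algebraMap ℚ K b * ω) * ω ^ 1 =
      algebraMap ℚ K (-b) + algebraMap ℚ K (a - b) * ω := by
    rw [map_neg, map_sub]
    linear_combination algebraMap ℚ K b * hω.sq_add_self_add_one
  have hmul_ω_sq : (algebraMap ℚ K a + algebraMap ℚ K b * ω) * ω ^ 2 =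
      algebraMap ℚ K (b - a) + algebraMap ℚ K (-a) * ω := by
    rw [map_neg, map_sub]
    linear_combination
      (algebraMap ℚ K a + algebraMap ℚ K b * (ω - 1)) * hω.sq_add_self_add_one
  rw [cycNorm, show Finset.Icc 1 (3 - 1) = {1, 2} by rfl, Finset.sum_pair (by norm_num),
    hmul_ω, hmul_ω_sq, hω.trace_algebraMap_add_algebraMap_mul,
    hω.trace_algebraMap_add_algebraMap_mul]
  push_cast
  ring_nf

end IsPrimitiveRoot

/-- Optimality of the constant `1/2` in the Krasner-type lemma: for `p = 3`, `α = ω`,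
`β = −1/2`, one has `d(α,β) = 3/√2`, `d(α,ω²) = 3√2`, hence `d(α,β) = (1/2)·d(α,ω²)`,
yet `ℚ(α) ⊄ ℚ(β)`. -/
theorem stmt4 (K : Type*) [Field K] [Algebra ℚ K] [IsCyclotomicExtension {3} ℚ K]
    (ω : K) (hω : IsPrimitiveRoot ω 3) :
    cycDist 3 ω ω (-(1 / 2 : K)) = 3 / Real.sqrt 2
    ∧ cycDist 3 ω ω (ω ^ 2) = 3 * Real.sqrt 2
    ∧ cycDist 3 ω ω (-(1 / 2 : K)) = (1 / 2) * cycDist 3 ω ω (ω ^ 2)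
    ∧ ¬ (IntermediateField.adjoin ℚ {ω} ≤ IntermediateField.adjoin ℚ {(-(1 / 2 : K))}) := by
  have hβ : cycDist 3 ω ω (-(1 / 2 : K)) = 3 / √2 := by
    rw [cycDist, show ω - -(1 / 2 : K) = algebraMap ℚ K (1 / 2) + algebraMap ℚ K 1 * ω by
      simp only [one_div, map_inv₀, map_ofNat, map_one]; ring, hω.cycNorm_algebraMap_add_algebraMap_mul,
      show (((1 / 2 + 1) ^ 2 + (2 * 1 - 1 / 2) ^ 2 : ℚ) : ℝ) = 3 ^ 2 / 2 by norm_num,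
      Real.sqrt_div' _ zero_le_two, Real.sqrt_sq zero_le_three]
  have hconj : cycDist 3 ω ω (ω ^ 2) = 3 * √2 := by
    rw [cycDist, show ω - ω ^ 2 = algebraMap ℚ K 1 + algebraMap ℚ K 2 * ω by
      simp only [map_one, map_ofNat]; linear_combination -hω.sq_add_self_add_one,
      hω.cycNorm_algebraMap_add_algebraMap_mul,
      show (((1 + 2) ^ 2 + (2 * 2 - 1) ^ 2 : ℚ) : ℝ) = 3 ^ 2 * 2 by norm_num,
      Real.sqrt_mul' _ zero_le_two, Real.sqrt_sq zero_le_three]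
  refine ⟨hβ, hconj, ?_, fun hle ↦ hω.notMem_bot_rat ?_⟩
  · rw [hβ, hconj, div_eq_iff (by positivity)]
    linear_combination (-3 / 2 : ℝ) * Real.mul_self_sqrt zero_le_two
  · have hrat : IntermediateField.adjoin ℚ {(-(1 / 2 : K))} = ⊥ :=
      IntermediateField.adjoin_simple_eq_bot_iff.mpr (by simp)
    exact hrat ▸ hle (IntermediateField.mem_adjoin_simple_self ℚ ω)
end

section
/- For α = a₁ω + ⋯ + a_{p−1}ω^{p−1} ∈ K with a_i ∈ ℚ, one has ‖α‖² = p²·(a₁² + ⋯ + a_{p−1}²) − (p+1)·Tr(α)², i.e., ‖α‖² = p²‖α‖_E² − (p+1)Tr(α)². -/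
open Polynomial Finset

theorem Polynomial.nextCoeff_cyclotomic_prime (R : Type*) [CommRing R] [Nontrivial R]
    (p : ℕ) [hp : Fact p.Prime] : (cyclotomic p R).nextCoeff = 1 := by
  have hp2 := hp.out.two_le
  have hX : (X ^ p - C 1 : R[X]).nextCoeff = 0 := by
    rw [nextCoeff, natDegree_X_pow_sub_C, if_neg (by omega), coeff_sub, coeff_X_pow, coeff_C,
      if_neg (by omega), if_neg (by omega), sub_zero]
  have h := congrArg nextCoeff (cyclotomic_prime_mul_X_sub_one R p)
  rw [← C_1, (cyclotomic.monic p R).nextCoeff_mul (monic_X_sub_C 1), nextCoeff_X_sub_C, hX] at h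
  linear_combination h

theorem Finset.sum_sq_mul_sub_sum {ι R : Type*} [CommRing R] (s : Finset ι) (f : ι → R)
    (c : R) :
    ∑ i ∈ s, (c * f i - ∑ j ∈ s, f j) ^ 2 =
      c ^ 2 * ∑ i ∈ s, f i ^ 2 - (2 * c - #s) * (∑ i ∈ s, f i) ^ 2 := by
  simp only [sub_sq, mul_pow, sum_add_distrib, sum_sub_distrib, ← mul_sum, ← sum_mul,
    sum_const, nsmul_eq_mul]
  ring

theorem Finset.sum_Icc_one_sub_reflect {M : Type*} [AddCommMonoid M] (f : ℕ → M) (n : ℕ) :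
    ∑ j ∈ Icc 1 (n - 1), f (n - j) = ∑ j ∈ Icc 1 (n - 1), f j := by
  refine sum_nbij' (n - ·) (n - ·) ?_ ?_ ?_ ?_ fun _ _ => rfl <;>
    · intro j hj
      simp only [mem_Icc] at hj ⊢
      omega

theorem Finset.filter_Icc_dvd_add_eq_singleton {p j : ℕ} (hj : j ∈ Icc 1 (p - 1)) :
    {i ∈ Icc 1 (p - 1) | p ∣ i + j} = {p - j} := by
  ext i
  simp only [mem_filter, mem_Icc, mem_singleton] at hj ⊢
  constructor
  · rintro ⟨hi, k, hk⟩
    rcases k with _ | _ | k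
    · omega
    · omega
    · rw [mul_add, mul_add, mul_one] at hk
      omega
  · rintro rfl
    exact ⟨by omega, 1, by omega⟩

section Trace

variable {p : ℕ} [hp : Fact p.Prime] {K : Type*} [Field K] [Algebra ℚ K]
  [IsCyclotomicExtension {p} ℚ K]

include hp in
theorem IsCyclotomicExtension.trace_one_eq_prime_sub_one : Algebra.trace ℚ K 1 = p - 1 := by
  rw [← (algebraMap ℚ K).map_one, Algebra.trace_algebraMap,
    IsCyclotomicExtension.finrank K (cyclotomic.irreducible_rat hp.out.pos),
    Nat.totient_prime hp.out, nsmul_eq_mul, mul_one, Nat.cast_sub hp.out.one_le, Nat.cast_one]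

theorem IsPrimitiveRoot.trace_eq_neg_one {ζ : K} (hζ : IsPrimitiveRoot ζ p) :
    Algebra.trace ℚ K ζ = -1 := by
  have htr := (hζ.powerBasis ℚ).trace_gen_eq_nextCoeff_minpoly
  rw [hζ.powerBasis_gen ℚ] at htr
  rw [htr, ← hζ.minpoly_eq_cyclotomic_of_irreducible (cyclotomic.irreducible_rat hp.out.pos),
    nextCoeff_cyclotomic_prime]

theorem IsPrimitiveRoot.trace_pow {ω : K} (hω : IsPrimitiveRoot ω p) (m : ℕ) :
    Algebra.trace ℚ K (ω ^ m) = if p ∣ m then (p : ℚ) - 1 else -1 := by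
  split_ifs with hm
  · rw [(hω.pow_eq_one_iff_dvd m).2 hm,
      IsCyclotomicExtension.trace_one_eq_prime_sub_one (p := p)]
  · have hcop : m.Coprime p := Nat.coprime_comm.1 (hp.out.coprime_iff_not_dvd.2 hm)
    exact (hω.pow_of_coprime m hcop).trace_eq_neg_one

theorem IsPrimitiveRoot.trace_sum_smul_pow_mul_pow {ω : K} (hω : IsPrimitiveRoot ω p)
    (s : Finset ℕ) (a : ℕ → ℚ) (j : ℕ) :
    Algebra.trace ℚ K ((∑ i ∈ s, a i • ω ^ i) * ω ^ j) =
      p * ∑ i ∈ s with p ∣ i + j, a i - ∑ i ∈ s, a i := by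
  have hterm (i : ℕ) : Algebra.trace ℚ K (a i • ω ^ i * ω ^ j) =
      (if p ∣ i + j then p * a i else 0) - a i := by
    rw [smul_mul_assoc, ← pow_add, map_smul, hω.trace_pow, smul_eq_mul]
    split_ifs <;> ring
  simp only [sum_mul, map_sum, hterm, sum_sub_distrib, ← sum_filter, mul_sum]

theorem IsPrimitiveRoot.trace_sum_smul_pow {ω : K} (hω : IsPrimitiveRoot ω p) (a : ℕ → ℚ) :
    Algebra.trace ℚ K (∑ i ∈ Icc 1 (p - 1), a i • ω ^ i) =
      -∑ i ∈ Icc 1 (p - 1), a i := by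
  have hnone : {i ∈ Icc 1 (p - 1) | p ∣ i + 0} = ∅ :=
    filter_eq_empty_iff.2 fun i hi =>
      have hi := mem_Icc.1 hi
      Nat.not_dvd_of_pos_of_lt (by omega) (by omega)
  have h0 := hω.trace_sum_smul_pow_mul_pow (Icc 1 (p - 1)) a 0
  rwa [pow_zero, mul_one, hnone, sum_empty, mul_zero, zero_sub] at h0

theorem IsPrimitiveRoot.trace_sum_smul_pow_mul_pow_of_mem {ω : K}
    (hω : IsPrimitiveRoot ω p) (a : ℕ → ℚ) {j : ℕ} (hj : j ∈ Icc 1 (p - 1)) :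
    Algebra.trace ℚ K ((∑ i ∈ Icc 1 (p - 1), a i • ω ^ i) * ω ^ j) =
      p * a (p - j) - ∑ i ∈ Icc 1 (p - 1), a i := by
  rw [hω.trace_sum_smul_pow_mul_pow, filter_Icc_dvd_add_eq_singleton hj, sum_singleton]

theorem IsPrimitiveRoot.sum_sq_trace_mul_pow {ω : K} (hω : IsPrimitiveRoot ω p)
    (a : ℕ → ℚ) :
    ∑ j ∈ Icc 1 (p - 1),
        Algebra.trace ℚ K ((∑ i ∈ Icc 1 (p - 1), a i • ω ^ i) * ω ^ j) ^ 2 =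
      (p : ℚ) ^ 2 * ∑ i ∈ Icc 1 (p - 1), a i ^ 2 -
        (p + 1) * Algebra.trace ℚ K (∑ i ∈ Icc 1 (p - 1), a i • ω ^ i) ^ 2 := by
  have hcard : (#(Icc 1 (p - 1)) : ℚ) = p - 1 := by
    rw [Nat.card_Icc, Nat.add_sub_cancel, Nat.cast_sub hp.out.one_le, Nat.cast_one]
  rw [sum_congr rfl fun j hj => by rw [hω.trace_sum_smul_pow_mul_pow_of_mem a hj],
    sum_Icc_one_sub_reflect (fun i => ((p : ℚ) * a i - ∑ i ∈ Icc 1 (p - 1), a i) ^ 2),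
    sum_sq_mul_sub_sum, hcard, hω.trace_sum_smul_pow]
  ring

end Trace

theorem stmt7_general (p : ℕ+) (hp : (p : ℕ).Prime)
    (K : Type*) [Field K] [Algebra ℚ K] [IsCyclotomicExtension {(p : ℕ)} ℚ K]
    (ω : K) (hω : IsPrimitiveRoot ω p) (a : ℕ → ℚ) (α : K)
    (hα : α = ∑ i ∈ Finset.Icc 1 ((p : ℕ) - 1), a i • ω ^ i) :
    (cycNorm p ω α) ^ 2 =
      (p : ℝ) ^ 2 * (∑ i ∈ Finset.Icc 1 ((p : ℕ) - 1), ((a i : ℝ)) ^ 2)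
        - ((p : ℝ) + 1) * ((Algebra.trace ℚ K α : ℚ) : ℝ) ^ 2 := by
  have := Fact.mk hp
  subst hα
  rw [cycNorm, Real.sq_sqrt (sum_nonneg fun _ _ => sq_nonneg _)]
  exact_mod_cast hω.sum_sq_trace_mul_pow a

/-- For `α = a₁ω + ⋯ + a_{p−1}ω^{p−1}`:
`‖α‖² = p²·(a₁² + ⋯ + a_{p−1}²) − (p+1)·Tr(α)²`. -/
theorem stmt7 (p : ℕ+) (hp : (p : ℕ).Prime) (hodd : Odd (p : ℕ))
    (K : Type*) [Field K] [Algebra ℚ K] [IsCyclotomicExtension {(p : ℕ)} ℚ K]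
    (ω : K) (hω : IsPrimitiveRoot ω p) (a : ℕ → ℚ) (α : K)
    (hα : α = ∑ i ∈ Finset.Icc 1 ((p : ℕ) - 1), a i • ω ^ i) :
    (cycNorm p ω α) ^ 2 =
      (p : ℝ) ^ 2 * (∑ i ∈ Finset.Icc 1 ((p : ℕ) - 1), ((a i : ℝ)) ^ 2)
        - ((p : ℝ) + 1) * ((Algebra.trace ℚ K α : ℚ) : ℝ) ^ 2 :=
  stmt7_general p hp K ω hω a α hα
end

section
/- The diameter of the box B(p,N) under the metric d equals 2Np√(p−1): for all α, β ∈ B(p,N) one has d(α, β) ≤ 2Np√(p−1), and equality is achieved by the pair α = Nω − Nω² + Nω³ − ⋯ + Nω^{p−2} − Nω^{p−1} (i.e., α = Σ_{i=1}^{p−1} N(−1)^{i−1} ω^i) and β = −α, both of which lie in B(p,N). -/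
/-- The box `B(p,N) = {a₁ω + ⋯ + a_{p−1}ω^{p−1} : aᵢ ∈ ℤ, −N ≤ aᵢ ≤ N}` as a finset of `K`. -/
noncomputable def cycBox (p : ℕ) {K : Type*} [Field K] [Algebra ℚ K] (ω : K) (N : ℕ) :
    Finset K :=
  letI := Classical.decEq K
  (Fintype.piFinset fun _ : Fin (p - 1) => Finset.Icc (-(N : ℤ)) (N : ℤ)).image
    fun a => ∑ i : Fin (p - 1), (a i : K) * ω ^ ((i : ℕ) + 1)

open Finset Polynomial

theorem Finset.sum_Icc_one_eq_sum_fin {M : Type*} [AddCommMonoid M] (n : ℕ) (f : ℕ → M) :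
    ∑ j ∈ Icc 1 n, f j = ∑ i : Fin n, f (i + 1) := by
  rw [← Ico_add_one_right_eq_Icc, sum_Ico_eq_sum_range, Nat.add_sub_cancel,
    Fin.sum_univ_eq_sum_range (fun i => f (i + 1))]
  simp only [add_comm]

theorem Finset.sum_Icc_one_eq_sum_fin_rev {M : Type*} [AddCommMonoid M] (n : ℕ) (f : ℕ → M) :
    ∑ j ∈ Icc 1 n, f j = ∑ i : Fin n, f (n - i) := by
  rw [sum_Icc_one_eq_sum_fin, Fin.sum_univ_eq_sum_range (fun i => f (n - i)),
    Fin.sum_univ_eq_sum_range (fun i => f (i + 1)), ← sum_range_reflect]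
  refine sum_congr rfl fun i hi => ?_
  rw [mem_range] at hi
  congr 1
  omega

theorem Fin.sum_neg_one_pow_of_even {R : Type*} [Ring R] {n : ℕ} (hn : Even n) :
    ∑ i : Fin n, (-1 : R) ^ (i : ℕ) = 0 := by
  rw [Fin.sum_univ_eq_sum_range (fun i => (-1 : R) ^ i), neg_one_geom_sum, if_pos hn]

theorem sum_sq_mul_sub_sum_le {ι R : Type*} [CommRing R] [LinearOrder R] [IsStrictOrderedRing R]
    (s : Finset ι) (c : ι → R) {q M : R} (hc : ∀ i ∈ s, |c i| ≤ M) (hq : (#s : R) ≤ 2 * q) :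
    ∑ i ∈ s, (q * c i - ∑ j ∈ s, c j) ^ 2 ≤ q ^ 2 * #s * M ^ 2 := by
  set S := ∑ j ∈ s, c j
  have expand : ∑ i ∈ s, (q * c i - S) ^ 2 = q ^ 2 * ∑ i ∈ s, c i ^ 2 - (2 * q - #s) * S ^ 2 := by
    simp only [sub_sq, sum_add_distrib, sum_sub_distrib, mul_pow, ← mul_sum, ← sum_mul,
      sum_const, nsmul_eq_mul, S]
    ring
  have hsq : ∑ i ∈ s, c i ^ 2 ≤ #s * M ^ 2 := by
    rw [← nsmul_eq_mul, ← sum_const]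
    exact sum_le_sum fun i hi => sq_le_sq' (abs_le.1 (hc i hi)).1 (abs_le.1 (hc i hi)).2
  rw [expand]
  nlinarith [sq_nonneg S, sq_nonneg q, mul_le_mul_of_nonneg_left hsq (sq_nonneg q),
    mul_nonneg (sub_nonneg.2 hq) (sq_nonneg S)]


def cycComb {K : Type*} [Ring K] (ω : K) (n : ℕ) : (Fin n → ℤ) →+ K where
  toFun a := ∑ i, (a i : K) * ω ^ ((i : ℕ) + 1)
  map_zero' := by simp
  map_add' a b := by simp [add_mul, sum_add_distrib]

theorem cycComb_apply {K : Type*} [Ring K] (ω : K) {n : ℕ} (a : Fin n → ℤ) :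
    cycComb ω n a = ∑ i, (a i : K) * ω ^ ((i : ℕ) + 1) :=
  rfl

theorem mem_cycBox_iff {p : ℕ} {K : Type*} [Field K] [Algebra ℚ K] {ω α : K} {N : ℕ} :
    α ∈ cycBox p ω N ↔ ∃ a : Fin (p - 1) → ℤ, (∀ i, |a i| ≤ N) ∧ cycComb ω (p - 1) a = α := by
  simp [cycBox, Fintype.mem_piFinset, abs_le, cycComb_apply]

section CycNorm

variable {p : ℕ} {K : Type*} [Field K] [Algebra ℚ K] [IsCyclotomicExtension {p} ℚ K] {ω : K}

theorem IsPrimitiveRoot.trace_eq_neg_one_of_prime (hp : p.Prime) (hω : IsPrimitiveRoot ω p) :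
    Algebra.trace ℚ K ω = -1 := by
  have : Fact p.Prime := ⟨hp⟩
  have hirr := cyclotomic.irreducible_rat hp.pos
  have := hp.two_le
  rw [← hω.powerBasis_gen ℚ, PowerBasis.trace_gen_eq_nextCoeff_minpoly, hω.powerBasis_gen ℚ,
    ← hω.minpoly_eq_cyclotomic_of_irreducible hirr,
    nextCoeff_of_natDegree_pos (by rw [natDegree_cyclotomic, Nat.totient_prime hp]; omega),
    natDegree_cyclotomic, Nat.totient_prime hp, cyclotomic_prime, finsetSum_coeff]
  simp only [coeff_X_pow]
  rw [sum_ite_eq, if_pos (mem_range.2 (by omega))]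

theorem IsPrimitiveRoot.trace_pow_of_prime (hp : p.Prime) (hω : IsPrimitiveRoot ω p) (k : ℕ) :
    Algebra.trace ℚ K (ω ^ k) = if p ∣ k then (p - 1 : ℚ) else -1 := by
  have : Fact p.Prime := ⟨hp⟩
  split_ifs with hk
  · rw [(hω.pow_eq_one_iff_dvd k).2 hk, ← map_one (algebraMap ℚ K), Algebra.trace_algebraMap,
      IsCyclotomicExtension.finrank K (cyclotomic.irreducible_rat hp.pos), Nat.totient_prime hp,
      nsmul_eq_mul, mul_one, Nat.cast_pred hp.pos]
  · exact (hω.pow_of_coprime k (hp.coprime_iff_not_dvd.2 hk).symm).trace_eq_neg_one_of_prime hp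


theorem trace_cycComb_mul_pow (hp : p.Prime) (hω : IsPrimitiveRoot ω p) (a : Fin (p - 1) → ℤ)
    (i : Fin (p - 1)) :
    Algebra.trace ℚ K (cycComb ω (p - 1) a * ω ^ (p - 1 - i)) = p * a i - ∑ j, (a j : ℚ) := by
  have := hp.two_le
  have hdvd (j : Fin (p - 1)) : p ∣ (j : ℕ) + 1 + (p - 1 - i) ↔ j = i := by
    refine ⟨fun h => ?_, fun h => ⟨1, by omega⟩⟩
    have := Nat.eq_of_dvd_of_lt_two_mul (by omega) h (by omega)
    exact Fin.ext (by omega)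
  have hterm (j : Fin (p - 1)) :
      (a j : K) * ω ^ ((j : ℕ) + 1) * ω ^ (p - 1 - i) = a j • ω ^ ((j : ℕ) + 1 + (p - 1 - i)) := by
    rw [zsmul_eq_mul, mul_assoc, ← pow_add]
  rw [cycComb_apply, sum_mul, sum_congr rfl fun j _ => hterm j, map_sum]
  have hcoeff (j : Fin (p - 1)) :
      a j • (if j = i then (p - 1 : ℚ) else -1) = (if j = i then (p : ℚ) * a j else 0) - a j := by
    split_ifs <;> simp; ring
  simp only [map_zsmul, hω.trace_pow_of_prime hp, hdvd, hcoeff]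
  rw [sum_sub_distrib, sum_ite_eq', if_pos (mem_univ i)]

theorem cycNorm_cycComb (hp : p.Prime) (hω : IsPrimitiveRoot ω p) (a : Fin (p - 1) → ℤ) :
    cycNorm p ω (cycComb ω (p - 1) a) = √(∑ i, ((p : ℝ) * a i - ∑ j, (a j : ℝ)) ^ 2) := by
  rw [cycNorm, sum_Icc_one_eq_sum_fin_rev]
  simp only [trace_cycComb_mul_pow hp hω]
  push_cast
  rfl

theorem cycNorm_cycComb_le (hp : p.Prime) (hω : IsPrimitiveRoot ω p) {a : Fin (p - 1) → ℤ}
    {M : ℕ} (ha : ∀ i, |a i| ≤ M) : cycNorm p ω (cycComb ω (p - 1) a) ≤ M * p * √(p - 1) := by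
  have hcard : (#(univ : Finset (Fin (p - 1))) : ℝ) = p - 1 := by
    rw [card_univ, Fintype.card_fin, Nat.cast_pred hp.pos]
  have hsum := sum_sq_mul_sub_sum_le univ (fun i => (a i : ℝ)) (q := p) (M := M)
    (fun i _ => by exact_mod_cast ha i) (by rw [hcard]; linarith)
  rw [hcard] at hsum
  calc cycNorm p ω (cycComb ω (p - 1) a)
      ≤ √((M * p) ^ 2 * (p - 1)) := by
        rw [cycNorm_cycComb hp hω]
        exact Real.sqrt_le_sqrt (by linarith)
    _ = M * p * √(p - 1) := by
        rw [Real.sqrt_mul (sq_nonneg _), Real.sqrt_sq (by positivity)]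

theorem cycNorm_cycComb_of_sum_eq_zero (hp : p.Prime) (hω : IsPrimitiveRoot ω p)
    {a : Fin (p - 1) → ℤ} (ha : ∑ i, a i = 0) :
    cycNorm p ω (cycComb ω (p - 1) a) = p * √(∑ i, (a i : ℝ) ^ 2) := by
  rw [cycNorm_cycComb hp hω, show ∑ j, (a j : ℝ) = 0 by exact_mod_cast ha]
  simp only [sub_zero, mul_pow, ← mul_sum]
  rw [Real.sqrt_mul (sq_nonneg _), Real.sqrt_sq (Nat.cast_nonneg p)]

end CycNorm

theorem stmt9_general (p : ℕ+) (hp : (p : ℕ).Prime) (hodd : Odd (p : ℕ))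
    (K : Type*) [Field K] [Algebra ℚ K] [IsCyclotomicExtension {(p : ℕ)} ℚ K]
    (ω : K) (hω : IsPrimitiveRoot ω p) (N : ℕ) :
    (∀ α ∈ cycBox p ω N, ∀ β ∈ cycBox p ω N,
        cycDist p ω α β ≤ 2 * N * p * Real.sqrt ((p : ℝ) - 1))
    ∧ ∀ α₀ : K,
        α₀ = ∑ i ∈ Finset.Icc 1 ((p : ℕ) - 1), ((N : K) * (-1) ^ (i - 1)) * ω ^ i →
          α₀ ∈ cycBox p ω N ∧ -α₀ ∈ cycBox p ω N ∧
            cycDist p ω α₀ (-α₀) = 2 * N * p * Real.sqrt ((p : ℝ) - 1) := by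
  refine ⟨fun α hα β hβ => ?_, fun α₀ hα₀ => ?_⟩
  · obtain ⟨a, ha, rfl⟩ := mem_cycBox_iff.1 hα
    obtain ⟨b, hb, rfl⟩ := mem_cycBox_iff.1 hβ
    have hab (i : Fin (p - 1)) : |(a - b) i| ≤ (2 * N : ℕ) := by
      rw [Pi.sub_apply, Nat.cast_mul, Nat.cast_two]
      linarith [abs_sub (a i) (b i), ha i, hb i]
    simpa [cycDist, ← map_sub] using cycNorm_cycComb_le hp hω hab
  · set a : Fin (p - 1) → ℤ := fun i => N * (-1) ^ (i : ℕ)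
    have hα₀a : cycComb ω (p - 1) a = α₀ := by
      rw [hα₀, sum_Icc_one_eq_sum_fin, cycComb_apply]
      simp [a]
    have habs (i : Fin (p - 1)) : |a i| = N := by simp [a, abs_mul]
    have hsum : ∑ i, (2 • a) i = 0 := by
      simp [a, ← mul_sum, Fin.sum_neg_one_pow_of_even (Nat.Odd.sub_odd hodd odd_one)]
    refine ⟨mem_cycBox_iff.2 ⟨a, fun i => (habs i).le, hα₀a⟩,
      mem_cycBox_iff.2 ⟨-a, fun i => by simp [habs], by rw [map_neg, hα₀a]⟩, ?_⟩
    rw [cycDist, sub_neg_eq_add, ← two_nsmul, ← hα₀a, ← map_nsmul,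
      cycNorm_cycComb_of_sum_eq_zero hp hω hsum]
    have hsq (i : Fin (p - 1)) : (((2 • a) i : ℤ) : ℝ) ^ 2 = (2 * N) ^ 2 := by
      simp [a, mul_pow, ← pow_mul]
    rw [sum_congr rfl fun i _ => hsq i, sum_const, card_univ, Fintype.card_fin, nsmul_eq_mul,
      Nat.cast_pred p.pos, mul_comm, Real.sqrt_mul (sub_nonneg.2 (Nat.one_le_cast.2 p.pos)),
      Real.sqrt_sq (by positivity)]
    ring

/-- The diameter of `B(p,N)` is `2Np√(p−1)`, achieved by
`α = Nω − Nω² + ⋯ + Nω^{p−2} − Nω^{p−1}` and `β = −α`. -/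
theorem stmt9 (p : ℕ+) (hp : (p : ℕ).Prime) (hodd : Odd (p : ℕ))
    (K : Type*) [Field K] [Algebra ℚ K] [IsCyclotomicExtension {(p : ℕ)} ℚ K]
    (ω : K) (hω : IsPrimitiveRoot ω p) (N : ℕ) (hN : 0 < N) :
    (∀ α ∈ cycBox p ω N, ∀ β ∈ cycBox p ω N,
        cycDist p ω α β ≤ 2 * N * p * Real.sqrt ((p : ℝ) - 1))
    ∧ ∀ α₀ : K,
        α₀ = ∑ i ∈ Finset.Icc 1 ((p : ℕ) - 1), ((N : K) * (-1) ^ (i - 1)) * ω ^ i →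
          α₀ ∈ cycBox p ω N ∧ -α₀ ∈ cycBox p ω N ∧
            cycDist p ω α₀ (-α₀) = 2 * N * p * Real.sqrt ((p : ℝ) - 1) :=
  stmt9_general p hp hodd K ω hω N
end

section
/- For any positive integer N and odd prime p, the averaged fourth-order coefficient sum satisfies (1/(2N+1)^{2(p−1)}) · Σ_{a,b} Σ_{i=1}^{p−1} Σ_{j=1}^{p−1} (a_i − b_i)²(a_j − b_j)² = (2/45)·N(N+1)(p−1)(10N²p + 4N² + 10Np + 4N − 3), where the outer sum runs over all pairs of tuples a = (a₁,…,a_{p−1}) and b = (b₁,…,b_{p−1}) of integers with −N ≤ a_i, b_i ≤ N for all i. -/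
/-!
Writing `d i = a i - b i`, the summand is `(∑ i, d i ^ 2) ^ 2`, and the pairs `(a i, b i)` range
independently over `[-N, N]²`. Expanding the square, the `p - 1` diagonal terms contribute the
average of `d ^ 4` each and the `(p - 1)(p - 2)` off-diagonal ones the square of the average of
`d ^ 2`. Both averages reduce to the power sums of `[-N, N]`, whose odd ones vanish.
-/

open Finset
open Fintype (piFinset)

section PiFinset

variable {ι κ R : Type*} [Fintype ι] [DecidableEq ι]

lemma sum_piFinset_mul_apply [CommSemiring R] (s : Finset κ) (f g : κ → R) {i j : ι}
    (hij : i ≠ j) :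
    ∑ c ∈ piFinset fun _ : ι ↦ s, f (c i) * g (c j)
      = #s ^ (Fintype.card ι - 2) • ((∑ x ∈ s, f x) * ∑ x ∈ s, g x) := by
  set G : ι → κ → R := fun k x ↦ if k = i then f x else if k = j then g x else 1
  have hG : ∀ c : ι → κ, ∏ k, G k (c k) = f (c i) * g (c j) := by
    intro c
    rw [← prod_mul_prod_compl {i, j}, prod_pair hij, prod_eq_one fun k hk ↦ ?_]
    · simp [G, hij.symm]
    · simp only [mem_compl, mem_insert, mem_singleton, not_or] at hk
      simp [G, hk.1, hk.2]
  have hG' : ∀ k ∈ ({i, j} : Finset ι)ᶜ, ∑ x ∈ s, G k x = #s := by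
    intro k hk
    simp only [mem_compl, mem_insert, mem_singleton, not_or] at hk
    simp [G, hk.1, hk.2]
  rw [← sum_congr rfl fun c _ ↦ hG c, sum_prod_piFinset, ← prod_mul_prod_compl {i, j},
    prod_pair hij, prod_congr rfl hG', prod_const, card_compl, card_pair hij, nsmul_eq_mul]
  simp [G, hij.symm, mul_comm]

lemma sum_piFinset_sq_sum [CommSemiring R] (s : Finset κ) (h : κ → R) :
    ∑ c ∈ piFinset fun _ : ι ↦ s, (∑ i, h (c i)) ^ 2
      = (Fintype.card ι * #s ^ (Fintype.card ι - 1)) • ∑ x ∈ s, h x ^ 2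
        + (Fintype.card ι * (Fintype.card ι - 1) * #s ^ (Fintype.card ι - 2)) •
          (∑ x ∈ s, h x) ^ 2 := by
  have hdiag : ∀ i : ι, ∑ c ∈ piFinset fun _ : ι ↦ s, h (c i) * h (c i)
      = #s ^ (Fintype.card ι - 1) • ∑ x ∈ s, h x ^ 2 := by
    intro i
    simp_rw [← sq]
    exact Fintype.sum_piFinset_apply (fun x ↦ h x ^ 2) s i
  have hrow : ∀ i : ι, ∑ j, ∑ c ∈ piFinset fun _ : ι ↦ s, h (c i) * h (c j)
      = #s ^ (Fintype.card ι - 1) • ∑ x ∈ s, h x ^ 2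
        + ((Fintype.card ι - 1) * #s ^ (Fintype.card ι - 2)) • (∑ x ∈ s, h x) ^ 2 := by
    intro i
    rw [← add_sum_erase _ _ (mem_univ i), hdiag,
      sum_congr rfl fun j hj ↦ sum_piFinset_mul_apply s h h (ne_of_mem_erase hj).symm,
      sum_const, card_erase_of_mem (mem_univ i), card_univ, smul_smul, sq]
  simp_rw [sq (∑ i, _), sum_mul_sum]
  rw [sum_comm]
  simp_rw [sum_comm (s := piFinset _) (t := univ), hrow]
  rw [sum_const, card_univ, smul_add, smul_smul, smul_smul, mul_assoc]

lemma sum_piFinset_sum_piFinset {α β : Type*} [AddCommMonoid R] (s : ι → Finset α)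
    (t : ι → Finset β) (F : (ι → α) → (ι → β) → R) :
    ∑ a ∈ piFinset s, ∑ b ∈ piFinset t, F a b
      = ∑ c ∈ piFinset fun i ↦ s i ×ˢ t i, F (fun i ↦ (c i).1) (fun i ↦ (c i).2) := by
  rw [← sum_product']
  refine (sum_equiv (Equiv.arrowProdEquivProdArrow ι _ _) (fun c ↦ ?_) fun _ _ ↦ rfl).symm
  simp [Equiv.arrowProdEquivProdArrow, forall_and]

lemma sum_piFinset_sq_sum_div [Field R] [CharZero R] (s : Finset κ) (hs : s.Nonempty)
    (h : κ → R) :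
    (∑ c ∈ piFinset fun _ : ι ↦ s, (∑ i, h (c i)) ^ 2) / #s ^ Fintype.card ι
      = Fintype.card ι * ((∑ x ∈ s, h x ^ 2) / #s)
        + Fintype.card ι * (Fintype.card ι - 1) * ((∑ x ∈ s, h x) / #s) ^ 2 := by
  have hcard : (#s : R) ≠ 0 := by simpa using hs.ne_empty
  rw [sum_piFinset_sq_sum, nsmul_eq_mul, nsmul_eq_mul]
  generalize Fintype.card ι = n
  rcases n with _ | _ | n
  · simp
  · simp
  · push_cast
    field_simp
    ring

end PiFinset

lemma sum_Icc_neg_succ {M : Type*} [AddCommMonoid M] (N : ℕ) (f : ℤ → M) :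
    ∑ x ∈ Icc (-(N + 1 : ℤ)) (N + 1), f x
      = f (-(N + 1)) + f (N + 1) + ∑ x ∈ Icc (-(N : ℤ)) N, f x := by
  have hIcc : Icc (-(N + 1 : ℤ)) (N + 1)
      = insert (-(N + 1 : ℤ)) (insert (N + 1 : ℤ) (Icc (-(N : ℤ)) N)) := by
    ext x; simp only [mem_Icc, mem_insert]; omega
  rw [hIcc, sum_insert (by simp only [mem_insert, mem_Icc]; omega),
    sum_insert (by simp only [mem_Icc]; omega), add_assoc]

lemma sum_Icc_neg_pow_of_odd (N : ℕ) {k : ℕ} (hk : Odd k) :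
    ∑ x ∈ Icc (-(N : ℤ)) N, (x : ℝ) ^ k = 0 := by
  induction N with
  | zero => simp [hk.pos.ne']
  | succ N ih =>
    push_cast
    rw [sum_Icc_neg_succ, ih]
    push_cast
    rw [hk.neg_pow]; ring

lemma sum_Icc_neg_sq (N : ℕ) :
    ∑ x ∈ Icc (-(N : ℤ)) N, (x : ℝ) ^ 2 = N * (N + 1) * (2 * N + 1) / 3 := by
  induction N with
  | zero => simp
  | succ N ih =>
    push_cast
    rw [sum_Icc_neg_succ, ih]
    push_cast; ring

lemma sum_Icc_neg_pow_four (N : ℕ) :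
    ∑ x ∈ Icc (-(N : ℤ)) N, (x : ℝ) ^ 4
      = N * (N + 1) * (2 * N + 1) * (3 * N ^ 2 + 3 * N - 1) / 15 := by
  induction N with
  | zero => simp
  | succ N ih =>
    push_cast
    rw [sum_Icc_neg_succ, ih]
    push_cast; ring

section Centered

variable {κ R : Type*} [CommRing R] (s : Finset κ) (u : κ → R)

lemma sum_product_sub_sq (h1 : ∑ x ∈ s, u x = 0) :
    ∑ z ∈ s ×ˢ s, (u z.1 - u z.2) ^ 2 = 2 * #s * ∑ x ∈ s, u x ^ 2 := by
  simp only [sum_product, sub_sq, sum_add_distrib, sum_sub_distrib, ← mul_sum, ← sum_mul, h1,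
    sum_const, nsmul_eq_mul]
  ring

lemma sum_product_sub_pow_four (h1 : ∑ x ∈ s, u x = 0) (h3 : ∑ x ∈ s, u x ^ 3 = 0) :
    ∑ z ∈ s ×ˢ s, (u z.1 - u z.2) ^ 4
      = 2 * #s * ∑ x ∈ s, u x ^ 4 + 6 * (∑ x ∈ s, u x ^ 2) ^ 2 := by
  have sub_pow_four : ∀ x y : R,
      (x - y) ^ 4 = x ^ 4 - 4 * x ^ 3 * y + 6 * x ^ 2 * y ^ 2 - 4 * x * y ^ 3 + y ^ 4 := by
    intro x y; ring
  simp only [sum_product, sub_pow_four, sum_add_distrib, sum_sub_distrib, ← mul_sum, ← sum_mul,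
    h1, h3, sum_const, nsmul_eq_mul]
  ring

end Centered

theorem stmt10_general (p N : ℕ) (hp : p.Prime) :
    (1 / ((2 * (N : ℝ) + 1)) ^ (2 * (p - 1))) *
      ∑ a ∈ Fintype.piFinset (fun _ : Fin (p - 1) => Finset.Icc (-(N : ℤ)) (N : ℤ)),
        ∑ b ∈ Fintype.piFinset (fun _ : Fin (p - 1) => Finset.Icc (-(N : ℤ)) (N : ℤ)),
          ∑ i : Fin (p - 1), ∑ j : Fin (p - 1),
            (((a i - b i : ℤ) : ℝ)) ^ 2 * (((a j - b j : ℤ) : ℝ)) ^ 2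
    = (2 / 45) * N * (N + 1) * ((p : ℝ) - 1) *
        (10 * N ^ 2 * p + 4 * N ^ 2 + 10 * N * p + 4 * N - 3) := by
  have hs : (Icc (-(N : ℤ)) N).Nonempty := nonempty_Icc.2 (by omega)
  have hcard : (#(Icc (-(N : ℤ)) N) : ℝ) = 2 * N + 1 := by
    rw [Int.card_Icc, show ((N : ℤ) + 1 - -N).toNat = 2 * N + 1 by omega]
    push_cast; ring
  have h1 : ∑ x ∈ Icc (-(N : ℤ)) N, (x : ℝ) = 0 := by
    simpa using sum_Icc_neg_pow_of_odd N odd_one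
  have h2 := sum_product_sub_sq _ (fun x : ℤ ↦ (x : ℝ)) h1
  have h4 := sum_product_sub_pow_four _ (fun x : ℤ ↦ (x : ℝ)) h1
    (sum_Icc_neg_pow_of_odd N (by decide))
  simp_rw [← Fintype.sum_mul_sum, ← sq]
  rw [sum_piFinset_sum_piFinset, one_div_mul_eq_div]
  have hmoment := sum_piFinset_sq_sum_div (ι := Fin (p - 1)) _ (hs.product hs)
    (fun z : ℤ × ℤ ↦ ((z.1 - z.2 : ℤ) : ℝ) ^ 2)
  rw [card_product, Nat.cast_mul, hcard, ← sq] at hmoment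
  simp only [← pow_mul, Nat.reduceMul, Int.cast_sub, Fintype.card_fin] at hmoment ⊢
  rw [hmoment, h2, h4, sum_Icc_neg_sq, sum_Icc_neg_pow_four, Nat.cast_sub hp.one_le, hcard]
  field_simp
  ring

/-- The averaged fourth-order coefficient sum over pairs of integer tuples in `[−N,N]^{p−1}`
equals `(2/45)·N(N+1)(p−1)(10N²p + 4N² + 10Np + 4N − 3)`. -/
theorem stmt10 (p N : ℕ) (hp : p.Prime) (hodd : Odd p) (hN : 0 < N) :
    (1 / ((2 * (N : ℝ) + 1)) ^ (2 * (p - 1))) *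
      ∑ a ∈ Fintype.piFinset (fun _ : Fin (p - 1) => Finset.Icc (-(N : ℤ)) (N : ℤ)),
        ∑ b ∈ Fintype.piFinset (fun _ : Fin (p - 1) => Finset.Icc (-(N : ℤ)) (N : ℤ)),
          ∑ i : Fin (p - 1), ∑ j : Fin (p - 1),
            (((a i - b i : ℤ) : ℝ)) ^ 2 * (((a j - b j : ℤ) : ℝ)) ^ 2
    = (2 / 45) * N * (N + 1) * ((p : ℝ) - 1) *
        (10 * N ^ 2 * p + 4 * N ^ 2 + 10 * N * p + 4 * N - 3) :=
  stmt10_general p N hp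
end
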